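/- arXiv:2107.10184 — 2 statements merged into one kernel-verified Lean document; each statement's English description precedes it below -/
import Mathlib

section
/- Let F be a field of characteristic zero and \kappa a nonzero scalar. If G(u,h) = \sum_{k\ge 0} G_k(u) h^k is an element of F((u))[[h]] satisfying G(u,h) G(u + \kappa h, h) = 1, where G(u + \kappa h, h) is defined via the formal Taylor expansion \sum_{l\ge 0} (\sum_{m=0}^{l} \kappa^m/m! \, d^m G_{l-m}/du^m) h^l, then G(u,h) = 1 or G(u,h) = -1; in particular, if additionally G(u,0) = 1 then G(u,h) = 1. -/
/-!
Comparing constant terms gives `G₀² = 1`, so `G₀ = ±1` is a constant and all its `u`-derivatives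
vanish. If `G_k` (`k > 0`) is the first nonzero higher coefficient, every derivative term in the
`h^k` coefficient of `G(u + κh, h)` hits a coefficient `G_j` (`j < k`) that is constant or zero, so
that coefficient is just `G_k`; the `h^k` coefficient of the product is then `2 G₀ G_k = 0`, and
`G_k = 0` in characteristic zero. Hence `G = G₀`.
-/

noncomputable section

variable {F : Type*} [Field F]

/-- Formal derivative of a power series. -/
def psDeriv (f : PowerSeries F) : PowerSeries F :=
  PowerSeries.mk fun n => ((n : F) + 1) * PowerSeries.coeff (R := F) (n + 1) f

/-- Formal derivative of a Laurent series: writing `f = u^d · g(u)` with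
`d = f.order` and `g` its power series part, `f' = d u^{d-1} g + u^d g'`. -/
def lsDeriv (f : LaurentSeries F) : LaurentSeries F :=
  HahnSeries.single (f.order - 1) ((f.order : ℤ) : F) *
      HahnSeries.ofPowerSeries ℤ F f.powerSeriesPart
    + HahnSeries.single f.order (1 : F) *
      HahnSeries.ofPowerSeries ℤ F (psDeriv f.powerSeriesPart)

/-- The formal Taylor shift `G(u,h) ↦ G(u + κh, h)` on `F((u))[[h]]`:
the coefficient of `h^k` of the shift is `∑_{m=0}^{k} κ^m/m! · (d/du)^m G_{k-m}(u)`. -/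
def taylorShift (κ : F) (G : PowerSeries (LaurentSeries F)) : PowerSeries (LaurentSeries F) :=
  PowerSeries.mk fun k => ∑ m ∈ Finset.range (k + 1),
    (κ ^ m / (m.factorial : F)) • lsDeriv^[m] (PowerSeries.coeff (R := LaurentSeries F) (k - m) G)


lemma psDeriv_zero : psDeriv (0 : PowerSeries F) = 0 := by
  ext n
  simp [psDeriv]

lemma psDeriv_C (c : F) : psDeriv (PowerSeries.C c) = 0 := by
  ext n
  simp [psDeriv]

lemma lsDeriv_zero : lsDeriv (0 : LaurentSeries F) = 0 := by
  simp [lsDeriv, psDeriv_zero]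

lemma lsDeriv_C (c : F) : lsDeriv (HahnSeries.C c : LaurentSeries F) = 0 := by
  have hpart : LaurentSeries.powerSeriesPart (HahnSeries.C c) = PowerSeries.C c := by
    ext n
    rw [LaurentSeries.powerSeriesPart_coeff, HahnSeries.order_C, HahnSeries.C_apply,
      HahnSeries.coeff_single, PowerSeries.coeff_C]
    simp
  simp only [lsDeriv, HahnSeries.order_C, hpart, psDeriv_C]
  simp

lemma iterate_lsDeriv_C {m : ℕ} (hm : m ≠ 0) (c : F) :
    lsDeriv^[m] (HahnSeries.C c : LaurentSeries F) = 0 := by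
  obtain ⟨m, rfl⟩ := Nat.exists_eq_succ_of_ne_zero hm
  rw [Function.iterate_succ_apply, lsDeriv_C, Function.iterate_fixed lsDeriv_zero]

lemma coeff_zero_taylorShift (κ : F) (G : PowerSeries (LaurentSeries F)) :
    PowerSeries.coeff 0 (taylorShift κ G) = PowerSeries.coeff 0 G := by
  simp [taylorShift]

lemma coeff_taylorShift_of_coeff_eq_zero (κ : F) {G : PowerSeries (LaurentSeries F)} {c : F}
    (hG₀ : PowerSeries.coeff 0 G = HahnSeries.C c) {k : ℕ}
    (hlow : ∀ j, 0 < j → j < k → PowerSeries.coeff j G = 0) :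
    PowerSeries.coeff k (taylorShift κ G) = PowerSeries.coeff k G := by
  rw [taylorShift, PowerSeries.coeff_mk, Finset.sum_eq_single 0 _ (by simp)]
  · simp
  intro m hm hm0
  rcases Nat.eq_zero_or_pos (k - m) with hkm | hkm
  · rw [hkm, hG₀, iterate_lsDeriv_C hm0, smul_zero]
  · rw [hlow (k - m) hkm (by omega), Function.iterate_fixed lsDeriv_zero, smul_zero]

lemma PowerSeries.coeff_mul_of_coeff_eq_zero {R : Type*} [CommSemiring R] {f : PowerSeries R}
    (g : PowerSeries R) {k : ℕ} (hk : 0 < k) (hf : ∀ j, 0 < j → j < k → coeff j f = 0) :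
    coeff k (f * g) = coeff 0 f * coeff k g + coeff k f * coeff 0 g := by
  rw [coeff_mul, Finset.sum_eq_add_of_mem (0, k) (k, 0) (by simp) (by simp) (by simp [hk.ne'])]
  rintro ⟨i, j⟩ hij hne
  have hij : i + j = k := Finset.HasAntidiagonal.mem_antidiagonal.mp hij
  rw [hf i (by grind) (by grind), zero_mul]

lemma coeff_zero_mul_self_of_mul_taylorShift_eq_one {κ : F} {G : PowerSeries (LaurentSeries F)}
    (hG : G * taylorShift κ G = 1) : PowerSeries.coeff 0 G * PowerSeries.coeff 0 G = 1 := by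
  have h := congrArg PowerSeries.constantCoeff hG
  rwa [map_mul, map_one, ← PowerSeries.coeff_zero_eq_constantCoeff_apply,
    ← PowerSeries.coeff_zero_eq_constantCoeff_apply, coeff_zero_taylorShift] at h

lemma eq_C_of_mul_taylorShift_eq_one [CharZero F] {κ : F} {G : PowerSeries (LaurentSeries F)}
    (hG : G * taylorShift κ G = 1) : G = PowerSeries.C (PowerSeries.coeff 0 G) := by
  have hsq := coeff_zero_mul_self_of_mul_taylorShift_eq_one hG
  obtain ⟨c, hc, hG₀⟩ : ∃ c : F, c ≠ 0 ∧ PowerSeries.coeff 0 G = HahnSeries.C c := by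
    rcases mul_self_eq_one_iff.mp hsq with h | h
    · exact ⟨1, one_ne_zero, by simp [h]⟩
    · exact ⟨-1, by simp, by simp [h]⟩
  have hpos : ∀ k, 0 < k → PowerSeries.coeff k G = 0 := by
    intro k
    induction k using Nat.strong_induction_on with
    | _ k ih =>
      intro hk
      have hlow : ∀ j, 0 < j → j < k → PowerSeries.coeff j G = 0 := fun j hj hjk => ih j hjk hj
      have hcoeff := congrArg (PowerSeries.coeff k) hG
      rw [PowerSeries.coeff_mul_of_coeff_eq_zero _ hk hlow,
        coeff_taylorShift_of_coeff_eq_zero κ hG₀ hlow, coeff_zero_taylorShift,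
        PowerSeries.coeff_one, if_neg hk.ne', hG₀] at hcoeff
      have htwice : HahnSeries.C (2 * c) * PowerSeries.coeff k G = 0 := by
        rw [map_mul, map_ofNat]
        linear_combination hcoeff
      exact (mul_eq_zero.mp htwice).resolve_left (HahnSeries.C_ne_zero (by simpa using hc))
  ext n
  rw [PowerSeries.coeff_C]
  rcases Nat.eq_zero_or_pos n with rfl | hn
  · simp
  · rw [hpos n hn, if_neg hn.ne']

theorem stmt1_general [CharZero F] (κ : F) (G : PowerSeries (LaurentSeries F))
    (hG : G * taylorShift κ G = 1) :
    (G = 1 ∨ G = -1) ∧ (PowerSeries.coeff (R := LaurentSeries F) 0 G = 1 → G = 1) := by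
  have hC := eq_C_of_mul_taylorShift_eq_one hG
  refine ⟨?_, fun h₀ => by rw [hC, h₀, map_one]⟩
  rcases mul_self_eq_one_iff.mp (coeff_zero_mul_self_of_mul_taylorShift_eq_one hG) with h | h
  · exact Or.inl (by rw [hC, h, map_one])
  · exact Or.inr (by rw [hC, h, map_neg, map_one])

/-- over a field `F` of characteristic zero, if
`G(u,h) ∈ F((u))[[h]]` satisfies `G(u,h) · G(u+κh,h) = 1` (with `κ ≠ 0` and the
shift interpreted via formal Taylor expansion), then `G = 1` or `G = -1`;
in particular if moreover `G(u,0) = 1` then `G = 1`. -/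
theorem stmt1 [CharZero F] (κ : F) (hκ : κ ≠ 0) (G : PowerSeries (LaurentSeries F))
    (hG : G * taylorShift κ G = 1) :
    (G = 1 ∨ G = -1) ∧ (PowerSeries.coeff (R := LaurentSeries F) 0 G = 1 → G = 1) :=
  stmt1_general κ G hG

end
end

section
/- Let \widehat{R}(u) be an R-matrix with values in End C^N \otimes End C^N ((u))[[h]] satisfying the Yang-Baxter equation \widehat{R}_{12}(u)\widehat{R}_{13}(u+v)\widehat{R}_{23}(v) = \widehat{R}_{23}(v)\widehat{R}_{13}(u+v)\widehat{R}_{12}(u). Suppose T^-(u) is an operator-valued series satisfying, for all k \ge 1, T^-_{k+1}(u) T^+_1(v_1) \cdots T^+_k(v_k) = \widehat{R}_{1,k+1}(-u+v_1-hc/2) \cdots \widehat{R}_{k,k+1}(-u+v_k-hc/2) T^+_1(v_1) \cdots T^+_k(v_k) \widehat{R}_{k,k+1}(-u+v_k+hc/2)^{-1} \cdots \widehat{R}_{1,k+1}(-u+v_1+hc/2)^{-1}. Then T^-(u) satisfies the RTT relation \widehat{R}(u_1-u_2) T^-_1(u_1) T^-_2(u_2) = T^-_2(u_2) T^-_1(u_1)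 \widehat{R}(u_1-u_2) as operators on the span of all T^+_1(v_1)\cdots T^+_k(v_k) applied to the vacuum. -/
set_option synthInstance.maxHeartbeats 1000000
set_option maxHeartbeats 1000000

noncomputable section

variable {S : Type*} [CommRing S]

/-- Two-leg scalar matrices: operators on `ℂ^N ⊗ ℂ^N` with entries in `S`. -/
abbrev Mat2 (N : ℕ) (S : Type*) := Matrix (Fin N × Fin N) (Fin N × Fin N) S

/-- Operators on `(ℂ^N)^{⊗ m}` with entries in a ring `A`. -/
abbrev BigMat (N m : ℕ) (A : Type*) := Matrix (Fin m → Fin N) (Fin m → Fin N) A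

/-- Embedding of a two-leg scalar matrix into the legs `a`, `b` of
`(ℂ^N)^{⊗ m}`, with scalars acting through the `S`-algebra `A`. -/
def leg2 {N m : ℕ} (A : Type*) [Ring A] [Algebra S A] (a b : Fin m) (M : Mat2 N S) :
    BigMat N m A :=
  fun f g =>
    if ∀ c, c ≠ a → c ≠ b → f c = g c then algebraMap S A (M (f a, f b) (g a, g b)) else 0

/-- Embedding of a one-leg `A`-valued matrix into the leg `a` of `(ℂ^N)^{⊗ m}`. -/
def leg1 {N m : ℕ} {A : Type*} [Ring A] (a : Fin m) (T : Matrix (Fin N) (Fin N) A) :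
    BigMat N m A :=
  fun f g => if ∀ c, c ≠ a → f c = g c then T (f a) (g a) else 0

/-- The ascending ordered product `f 0 * f 1 * ⋯ * f (k-1)`. -/
def ascProd {M : Type*} [Monoid M] {k : ℕ} (f : Fin k → M) : M :=
  (List.ofFn f).prod

/-- The descending ordered product `f (k-1) * ⋯ * f 1 * f 0`. -/
def descProd {M : Type*} [Monoid M] {k : ℕ} (f : Fin k → M) : M :=
  ((List.ofFn f).reverse).prod

/-- Entrywise application of an operator-valued matrix to a vector. -/
def applyV {N m : ℕ} {W : Type*} [AddCommGroup W] [Module S W]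
    (M : BigMat N m (Module.End S W)) (w : W) :
    Matrix (Fin m → Fin N) (Fin m → Fin N) W :=
  fun f g => (M f g) w

/-!
Write `Q = R̂_{ab}(u₁ - u₂)` for the legs `a, b` of `T⁻(u₁), T⁻(u₂)` and `P = T⁺₁(v₁) ⋯ T⁺ₖ(vₖ)`,
and read the hypothesis as `T⁻_a(u) P 𝟙 = A_a(u) P B_a(u) 𝟙`. Such identities of vectors survive
left multiplication by anything and right multiplication by scalar matrices, so applying the
hypothesis twice brings both sides of the RTT relation to `A_a A_b P B_b B_a Q 𝟙`. On the left
this needs `Q A_b A_a = A_a A_b Q` and `Q B_a B_b = B_b B_a Q`: factors on disjoint legs commute,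
and `Q` passes the remaining pairs on legs `(i, a, b)` by the Yang–Baxter equation (for the
`B`'s, by its inverse).
-/

section OrderedProducts
variable {M : Type*} [Monoid M]

theorem mul_list_prod_mul_list_prod {ι : Type*} {Q : M} {U V : ι → M} {l : List ι}
    (hl : l.Nodup) (hcomm : ∀ i j, i ≠ j → Commute (U i) (V j))
    (hexch : ∀ i, Q * (U i * V i) = V i * U i * Q) :
    Q * ((l.map U).prod * (l.map V).prod) = (l.map V).prod * (l.map U).prod * Q := by
  induction l with
  | nil => simp
  | cons a l ih =>
    obtain ⟨ha, hl⟩ := List.nodup_cons.mp hl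
    have hV : Commute (V a) (l.map U).prod := Commute.list_prod_right _ _ <| by
      simpa using fun i hi => (hcomm i a (ne_of_mem_of_not_mem hi ha)).symm
    have hU : Commute (U a) (l.map V).prod := Commute.list_prod_right _ _ <| by
      simpa using fun i hi => hcomm a i (ne_of_mem_of_not_mem hi ha).symm
    calc Q * ((U a * (l.map U).prod) * (V a * (l.map V).prod))
        = Q * (U a * V a) * ((l.map U).prod * (l.map V).prod) := by
          rw [mul_assoc (U a), ← mul_assoc _ (V a), ← hV.eq]; simp only [mul_assoc]
      _ = V a * U a * ((l.map V).prod * (l.map U).prod * Q) := by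
          rw [hexch, mul_assoc, ih hl]
      _ = (V a * (l.map V).prod) * (U a * (l.map U).prod) * Q := by
          rw [mul_assoc (V a) _ (U a * _), ← mul_assoc _ (U a), ← hU.eq]; simp only [mul_assoc]

theorem ascProd_eq_list_prod {k : ℕ} (f : Fin k → M) :
    ascProd f = ((List.finRange k).map f).prod := by
  rw [ascProd, List.ofFn_eq_map]

theorem descProd_eq_list_prod {k : ℕ} (f : Fin k → M) :
    descProd f = ((List.finRange k).reverse.map f).prod := by
  rw [descProd, List.ofFn_eq_map, List.map_reverse]

theorem mul_ascProd_mul_ascProd {k : ℕ} {Q : M} {U V : Fin k → M}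
    (hcomm : ∀ i j, i ≠ j → Commute (U i) (V j))
    (hexch : ∀ i, Q * (U i * V i) = V i * U i * Q) :
    Q * (ascProd U * ascProd V) = ascProd V * ascProd U * Q := by
  simp only [ascProd_eq_list_prod]
  exact mul_list_prod_mul_list_prod (List.nodup_finRange k) hcomm hexch

theorem mul_descProd_mul_descProd {k : ℕ} {Q : M} {U V : Fin k → M}
    (hcomm : ∀ i j, i ≠ j → Commute (U i) (V j))
    (hexch : ∀ i, Q * (U i * V i) = V i * U i * Q) :
    Q * (descProd U * descProd V) = descProd V * descProd U * Q := by
  simp only [descProd_eq_list_prod]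
  exact mul_list_prod_mul_list_prod (List.nodup_reverse.mpr (List.nodup_finRange k)) hcomm hexch

theorem map_ascProd {M' F : Type*} [Monoid M'] [FunLike F M M'] [MonoidHomClass F M M']
    (φ : F) {k : ℕ} (f : Fin k → M) : φ (ascProd f) = ascProd fun i => φ (f i) := by
  simp only [ascProd, map_list_prod, List.map_ofFn, Function.comp_def]

theorem map_descProd {M' F : Type*} [Monoid M'] [FunLike F M M'] [MonoidHomClass F M M']
    (φ : F) {k : ℕ} (f : Fin k → M) : φ (descProd f) = descProd fun i => φ (f i) := by
  simp only [descProd, map_list_prod, List.map_reverse, List.map_ofFn, Function.comp_def]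

theorem commute_ascProd {k : ℕ} {x : M} {f : Fin k → M} (h : ∀ i, Commute x (f i)) :
    Commute x (ascProd f) :=
  Commute.list_prod_right _ _ fun y hy => by
    obtain ⟨i, rfl⟩ := List.mem_ofFn.mp hy
    exact h i

theorem descProd_mem {T : Type*} [SetLike T M] [SubmonoidClass T M] {s : T} {k : ℕ}
    {f : Fin k → M} (h : ∀ i, f i ∈ s) : descProd f ∈ s := by
  rw [descProd_eq_list_prod]
  exact list_prod_mem (by simpa using h)

end OrderedProducts

section OnLegs
variable {N m m' : ℕ} {A : Type*}

/-- `M` acting on the legs `ι 0, ι 1, …` of `(ℂ^N)^{⊗ m}` and as the identity on the others. -/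
def onLegs [Zero A] (ι : Fin m' → Fin m) (M : BigMat N m' A) : BigMat N m A :=
  fun f g => if ∀ c, (∀ a, ι a ≠ c) → f c = g c then M (f ∘ ι) (g ∘ ι) else 0

variable [Semiring A] {ι : Fin m' → Fin m}

theorem sum_ite_agree_off (hι : Function.Injective ι) (f : Fin m → Fin N)
    (G : (Fin m' → Fin N) → A) :
    ∑ h, (if ∀ c, (∀ a, ι a ≠ c) → f c = h c then G (h ∘ ι) else 0) = ∑ x, G x := by
  rw [← Finset.sum_filter]
  apply Finset.sum_nbij' (· ∘ ι) (Function.extend ι · f)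
  · simp
  · intro x _
    simp only [Finset.mem_filter, Finset.mem_univ, true_and]
    intro c hc
    rw [Function.extend_apply' _ _ _ fun ⟨a, ha⟩ => hc a ha]
  · intro h hh
    simp only [Finset.mem_filter, Finset.mem_univ, true_and] at hh
    funext c
    by_cases hc : ∃ a, ι a = c
    · obtain ⟨a, rfl⟩ := hc
      exact hι.extend_apply _ _ _
    · rw [Function.extend_apply' _ _ _ hc]
      exact hh c fun a ha => hc ⟨a, ha⟩
  · intro x _
    funext a
    exact hι.extend_apply _ _ _
  · intro _ _
    rfl

theorem onLegs_mul (hι : Function.Injective ι) (M M' : BigMat N m' A) :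
    onLegs ι (M * M') = onLegs ι M * onLegs ι M' := by
  ext f g
  simp only [Matrix.mul_apply, onLegs]
  split_ifs with hfg
  · rw [← sum_ite_agree_off hι f]
    refine Finset.sum_congr rfl fun h _ => ?_
    have hhg : (∀ c, (∀ a, ι a ≠ c) → h c = g c) ↔ ∀ c, (∀ a, ι a ≠ c) → f c = h c :=
      ⟨fun hh c hc => (hfg c hc).trans (hh c hc).symm,
        fun hh c hc => (hh c hc).symm.trans (hfg c hc)⟩
    simp only [hhg]
    split_ifs <;> simp
  · refine (Finset.sum_eq_zero fun h _ => ?_).symm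
    split_ifs with h1 h2 <;> try simp
    exact (hfg fun c hc => (h1 c hc).trans (h2 c hc)).elim

theorem onLegs_one : onLegs (N := N) (A := A) ι 1 = 1 := by
  ext f g
  have hfg : f = g ↔ (∀ c, (∀ a, ι a ≠ c) → f c = g c) ∧ f ∘ ι = g ∘ ι := by
    refine ⟨by rintro rfl; simp, fun ⟨hoff, hon⟩ => funext fun c => ?_⟩
    by_cases hc : ∃ a, ι a = c
    · obtain ⟨a, rfl⟩ := hc
      exact congrFun hon a
    · exact hoff c fun a ha => hc ⟨a, ha⟩
  simp only [onLegs, Matrix.one_apply, hfg, ite_and]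

def onLegsHom (hι : Function.Injective ι) : BigMat N m' A →* BigMat N m A where
  toFun := onLegs ι
  map_one' := onLegs_one
  map_mul' := onLegs_mul hι

@[simp]
theorem onLegsHom_apply (hι : Function.Injective ι) (M : BigMat N m' A) :
    onLegsHom hι M = onLegs ι M :=
  rfl

theorem onLegs_onLegs {m'' : ℕ} (hι : Function.Injective ι) (κ : Fin m'' → Fin m')
    (M : BigMat N m'' A) : onLegs ι (onLegs κ M) = onLegs (ι ∘ κ) M := by
  ext f g
  simp only [onLegs, Function.comp_apply]
  by_cases hfg : ∀ c, (∀ a, ι (κ a) ≠ c) → f c = g c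
  · have hout : ∀ c, (∀ a, ι a ≠ c) → f c = g c := fun c hc => hfg c fun a => hc (κ a)
    have hin : ∀ c, (∀ a, κ a ≠ c) → f (ι c) = g (ι c) := fun c hc =>
      hfg (ι c) fun a ha => hc a (hι ha)
    rw [if_pos hfg, if_pos hout, if_pos hin]
    rfl
  · have hnot :
        ¬ ((∀ c, (∀ a, ι a ≠ c) → f c = g c) ∧ ∀ c, (∀ a, κ a ≠ c) → f (ι c) = g (ι c)) := by
      refine fun ⟨hout, hin⟩ => hfg fun c hc => ?_
      by_cases hc' : ∃ a, ι a = c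
      · obtain ⟨a, rfl⟩ := hc'
        exact hin a fun a' ha' => hc a' (congrArg ι ha')
      · exact hout c fun a ha => hc' ⟨a, ha⟩
    rw [if_neg hfg]
    split_ifs <;> simp_all

theorem onLegs_mul_onLegs_apply {m'' : ℕ} {κ : Fin m'' → Fin m} (hdisj : ∀ i j, ι i ≠ κ j)
    (M : BigMat N m' A) (K : BigMat N m'' A) (f g : Fin m → Fin N) :
    (onLegs ι M * onLegs κ K) f g =
      if ∀ c, (∀ i, ι i ≠ c) → (∀ j, κ j ≠ c) → f c = g c then
        M (f ∘ ι) (g ∘ ι) * K (f ∘ κ) (g ∘ κ) else 0 := by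
  -- the only intermediate index contributing: `g` on the legs of `ι`, `f` elsewhere
  obtain ⟨h₀, hh₀⟩ : ∃ h₀ : Fin m → Fin N, ∀ c, h₀ c = if ∀ i, ι i ≠ c then f c else g c :=
    ⟨_, fun _ => rfl⟩
  have h₀ι : h₀ ∘ ι = g ∘ ι := funext fun a => (hh₀ _).trans (if_neg fun h => h a rfl)
  have h₀κ : h₀ ∘ κ = f ∘ κ := funext fun j => (hh₀ _).trans (if_pos fun i => hdisj i j)
  rw [Matrix.mul_apply, Finset.sum_eq_single h₀]
  · have hleft : ∀ c, (∀ a, ι a ≠ c) → f c = h₀ c := fun c hc => by rw [hh₀, if_pos hc]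
    have hright : (∀ c, (∀ j, κ j ≠ c) → h₀ c = g c) ↔
        ∀ c, (∀ i, ι i ≠ c) → (∀ j, κ j ≠ c) → f c = g c := by
      refine forall_congr' fun c => ?_
      by_cases hc : ∀ i, ι i ≠ c
      · rw [hh₀, if_pos hc]
        exact ⟨fun h _ => h, fun h => h hc⟩
      · rw [hh₀, if_neg hc]
        exact ⟨fun _ h => (hc h).elim, fun _ _ => rfl⟩
    simp only [onLegs, if_pos hleft, hright, h₀ι, h₀κ]
    split_ifs <;> simp
  · intro h _ hne
    simp only [onLegs]
    split_ifs with hfh hhg <;> try simp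
    refine (hne (funext fun c => ?_)).elim
    by_cases hc : ∀ i, ι i ≠ c
    · rw [hh₀, if_pos hc, hfh c hc]
    · obtain ⟨i, rfl⟩ : ∃ i, ι i = c := by simpa using hc
      rw [hh₀, if_neg hc, hhg _ fun j hj => hdisj i j hj.symm]
  · simp

theorem onLegs_commute {m'' : ℕ} {κ : Fin m'' → Fin m} (hdisj : ∀ i j, ι i ≠ κ j)
    {M : BigMat N m' A} {K : BigMat N m'' A} (hMK : ∀ x y x' y', Commute (M x y) (K x' y')) :
    Commute (onLegs ι M) (onLegs κ K) := by
  ext f g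
  rw [onLegs_mul_onLegs_apply hdisj, onLegs_mul_onLegs_apply fun j i => (hdisj i j).symm]
  simp only [forall_comm (α := ∀ i, ι i ≠ _), (hMK _ _ _ _).eq]

end OnLegs

section Legs
variable {N m m' : ℕ} {A : Type*} [Ring A] [Algebra S A]

def twoLeg : Mat2 N S →+* BigMat N 2 A :=
  (Matrix.reindexAlgEquiv S A (finTwoArrowEquiv (Fin N)).symm).toRingHom.comp
    (algebraMap S A).mapMatrix

theorem twoLeg_apply (M : Mat2 N S) (f g : Fin 2 → Fin N) :
    twoLeg (A := A) M f g = algebraMap S A (M (f 0, f 1) (g 0, g 1)) :=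
  rfl

theorem leg2_eq_onLegs (a b : Fin m) (M : Mat2 N S) :
    leg2 (S := S) A a b M = onLegs ![a, b] (twoLeg M) := by
  ext f g
  simp only [leg2, onLegs, twoLeg_apply, Fin.forall_fin_two, Matrix.cons_val_zero,
    Matrix.cons_val_one, Function.comp_apply]
  exact if_congr (forall_congr' fun c => by rw [and_imp, ne_comm (a := a), ne_comm (a := b)])
    rfl rfl

theorem leg1_eq_onLegs (a : Fin m) (T : Matrix (Fin N) (Fin N) A) :
    leg1 a T = onLegs ![a] (T.submatrix (· 0) (· 0)) := by
  ext f g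
  simp only [leg1, onLegs, Fin.forall_fin_one, Matrix.cons_val_zero, Matrix.submatrix_apply,
    Function.comp_apply]
  exact if_congr (forall_congr' fun c => by rw [ne_comm]) rfl rfl

theorem injective_vec2 {a b : Fin m} (hab : a ≠ b) : Function.Injective ![a, b] := by
  simp [Function.Injective, Fin.forall_fin_two, hab, hab.symm]

variable {ι : Fin m' → Fin m}

theorem onLegs_leg2 (hι : Function.Injective ι) (a b : Fin m') (M : Mat2 N S) :
    onLegs ι (leg2 (S := S) A a b M) = leg2 A (ι a) (ι b) M := by
  have hcomp : ι ∘ ![a, b] = ![ι a, ι b] := funext fun i => by fin_cases i <;> rfl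
  rw [leg2_eq_onLegs, onLegs_onLegs hι, leg2_eq_onLegs, hcomp]

theorem onLegs_leg1 (hι : Function.Injective ι) (a : Fin m') (T : Matrix (Fin N) (Fin N) A) :
    onLegs ι (leg1 a T) = leg1 (ι a) T := by
  have hcomp : ι ∘ ![a] = ![ι a] := funext fun i => by fin_cases i; rfl
  rw [leg1_eq_onLegs, onLegs_onLegs hι, leg1_eq_onLegs, hcomp]

theorem mapMatrix_leg2 (a b : Fin m) (M : Mat2 N S) :
    (algebraMap S A).mapMatrix (leg2 S a b M) = leg2 (S := S) A a b M := by
  ext f g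
  rw [RingHom.mapMatrix_apply, Matrix.map_apply, leg2, leg2, apply_ite (algebraMap S A), map_zero,
    Algebra.algebraMap_self_apply]

theorem leg2_mul {a b : Fin m} (hab : a ≠ b) (M M' : Mat2 N S) :
    leg2 (S := S) A a b M * leg2 A a b M' = leg2 A a b (M * M') := by
  simp only [leg2_eq_onLegs, map_mul, onLegs_mul (injective_vec2 hab)]

theorem leg2_one (a b : Fin m) : leg2 (S := S) A a b (1 : Mat2 N S) = 1 := by
  rw [leg2_eq_onLegs, map_one, onLegs_one]

theorem leg2_commute_onLegs {a b : Fin m} {κ : Fin m' → Fin m} (ha : ∀ j, κ j ≠ a)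
    (hb : ∀ j, κ j ≠ b) (M : Mat2 N S) (K : BigMat N m' A) :
    Commute (leg2 (S := S) A a b M) (onLegs κ K) := by
  rw [leg2_eq_onLegs]
  refine onLegs_commute ?_ fun _ _ _ _ => Algebra.commute_algebraMap_left _ _
  exact fun i j => by fin_cases i; exacts [(ha j).symm, (hb j).symm]

theorem leg2_commute_leg1 {a b d : Fin m} (hda : d ≠ a) (hdb : d ≠ b) (M : Mat2 N S)
    (T : Matrix (Fin N) (Fin N) A) : Commute (leg2 (S := S) A a b M) (leg1 d T) := by
  rw [leg1_eq_onLegs]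
  exact leg2_commute_onLegs (by simpa using hda) (by simpa using hdb) _ _

theorem leg2_commute_leg2 {a b a' b' : Fin m} (haa : a' ≠ a) (hab : a' ≠ b) (hba : b' ≠ a)
    (hbb : b' ≠ b) (M M' : Mat2 N S) :
    Commute (leg2 (S := S) A a b M) (leg2 A a' b' M') := by
  have h := leg2_commute_onLegs (A := A) (κ := ![a', b']) (Fin.forall_fin_two.mpr ⟨haa, hba⟩)
    (Fin.forall_fin_two.mpr ⟨hab, hbb⟩) M (twoLeg M')
  rwa [← leg2_eq_onLegs] at h

end Legs

section YangBaxter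
variable {N m : ℕ} {A : Type*} [Ring A] [Algebra S A]

def IsYangBaxter (R : S → Mat2 N S) : Prop :=
  ∀ x y : S,
    leg2 (S := S) S (0 : Fin 3) 1 (R x) * leg2 S (0 : Fin 3) 2 (R (x + y)) *
        leg2 S (1 : Fin 3) 2 (R y) =
      leg2 S (1 : Fin 3) 2 (R y) * leg2 S (0 : Fin 3) 2 (R (x + y)) * leg2 S (0 : Fin 3) 1 (R x)

variable {R Rinv : S → Mat2 N S} {p q r : Fin m}

theorem IsYangBaxter.legs (hYBE : IsYangBaxter R) (hpq : p ≠ q) (hpr : p ≠ r) (hqr : q ≠ r)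
    (x y : S) :
    leg2 (S := S) A p q (R x) * leg2 A p r (R (x + y)) * leg2 A q r (R y) =
      leg2 A q r (R y) * leg2 A p r (R (x + y)) * leg2 A p q (R x) := by
  have hinj : Function.Injective ![p, q, r] := by
    intro i j h
    fin_cases i <;> fin_cases j <;> simp_all [eq_comm]
  have h := congrArg (fun X => onLegsHom hinj ((algebraMap S A).mapMatrix X)) (hYBE x y)
  simpa only [map_mul, mapMatrix_leg2, onLegsHom_apply, onLegs_leg2 hinj, Matrix.cons_val_zero,
    Matrix.cons_val_one, Matrix.cons_val_two, Matrix.tail_cons, Matrix.head_cons] using h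

theorem IsYangBaxter.legs_inv (hYBE : IsYangBaxter R)
    (hR : ∀ w, R w * Rinv w = 1 ∧ Rinv w * R w = 1) (hpq : p ≠ q) (hpr : p ≠ r) (hqr : q ≠ r)
    (x y : S) :
    leg2 (S := S) A q r (R y) * (leg2 A p q (Rinv x) * leg2 A p r (Rinv (x + y))) =
      leg2 A p r (Rinv (x + y)) * leg2 A p q (Rinv x) * leg2 A q r (R y) := by
  have leg2Unit : ∀ {a b : Fin m}, a ≠ b → ∀ w, ∃ U : (BigMat N m A)ˣ,
      ↑U = leg2 A a b (R w) ∧ ↑U⁻¹ = leg2 A a b (Rinv w) := fun {a b} hab w =>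
    ⟨⟨leg2 A a b (R w), leg2 A a b (Rinv w), by rw [leg2_mul hab, (hR w).1, leg2_one],
      by rw [leg2_mul hab, (hR w).2, leg2_one]⟩, rfl, rfl⟩
  obtain ⟨U, hU, hU'⟩ := leg2Unit hpq x
  obtain ⟨V, hV, hV'⟩ := leg2Unit hpr (x + y)
  have h : SemiconjBy (leg2 A q r (R y)) ↑(V * U) ↑(U * V) := by
    rw [SemiconjBy, Units.val_mul, Units.val_mul, hU, hV, ← mul_assoc]
    exact (hYBE.legs hpq hpr hqr x y).symm
  simpa only [SemiconjBy, mul_inv_rev, Units.val_mul, hU', hV'] using h.units_inv_right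

end YangBaxter

section ApplyV
variable {N m : ℕ} {W : Type*} [AddCommGroup W] [Module S W] {vac : W}

theorem applyV_mul_mul_congr (C : BigMat N m (Module.End S W))
    {X Y : BigMat N m (Module.End S W)} (h : applyV (S := S) X vac = applyV Y vac)
    {D : BigMat N m (Module.End S W)} (hD : D ∈ (algebraMap S (Module.End S W)).mapMatrix.range) :
    applyV (S := S) (C * X * D) vac = applyV (C * Y * D) vac := by
  obtain ⟨d, rfl⟩ := hD
  have expand : ∀ (Z : BigMat N m (Module.End S W)) f g,
      applyV (S := S) (C * Z * (algebraMap S _).mapMatrix d) vac f g =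
        ∑ h', d h' g • ∑ h, C f h (applyV (S := S) Z vac h h') := fun Z f g => by
    simp only [applyV, Matrix.mul_apply, LinearMap.sum_apply, Module.End.mul_apply,
      RingHom.mapMatrix_apply, Matrix.map_apply, Module.algebraMap_end_apply, map_smul]
  ext f g
  rw [expand, expand, h]

theorem applyV_onLegs {m' : ℕ} (ι : Fin m' → Fin m) {X Y : BigMat N m' (Module.End S W)}
    (h : applyV (S := S) X vac = applyV Y vac) :
    applyV (S := S) (onLegs ι X) vac = applyV (onLegs ι Y) vac := by
  ext f g
  simp only [applyV, onLegs]
  split_ifs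
  exacts [congrFun (congrFun h _) _, rfl]

theorem applyV_rtt_of_exchange {T₁ T₂ P Q A₁ A₂ B₁ B₂ : BigMat N m (Module.End S W)}
    (hT₁ : applyV (S := S) (T₁ * P) vac = applyV (A₁ * P * B₁) vac)
    (hT₂ : applyV (S := S) (T₂ * P) vac = applyV (A₂ * P * B₂) vac)
    (hA : Q * (A₂ * A₁) = A₁ * A₂ * Q) (hB : Q * (B₁ * B₂) = B₂ * B₁ * Q)
    (hQP : Commute Q P) (hT₁A₂ : Commute T₁ A₂) (hT₂A₁ : Commute T₂ A₁)
    (hQ : Q ∈ (algebraMap S (Module.End S W)).mapMatrix.range)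
    (hB₁ : B₁ ∈ (algebraMap S (Module.End S W)).mapMatrix.range)
    (hB₂ : B₂ ∈ (algebraMap S (Module.End S W)).mapMatrix.range) :
    applyV (S := S) (Q * T₁ * T₂ * P) vac = applyV (T₂ * T₁ * Q * P) vac := by
  have exchange : Q * A₂ * (A₁ * P * B₁) * B₂ = A₁ * A₂ * P * (B₂ * B₁ * Q) := calc
    _ = Q * (A₂ * A₁) * P * (B₁ * B₂) := by simp only [mul_assoc]
    _ = A₁ * A₂ * (Q * P) * (B₁ * B₂) := by rw [hA]; simp only [mul_assoc]
    _ = A₁ * A₂ * P * (Q * (B₁ * B₂)) := by rw [hQP.eq]; simp only [mul_assoc]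
    _ = _ := by rw [hB]
  calc applyV (S := S) (Q * T₁ * T₂ * P) vac
      = applyV (Q * T₁ * (T₂ * P) * 1) vac := by simp only [mul_assoc, mul_one]
    _ = applyV (Q * T₁ * (A₂ * P * B₂) * 1) vac := applyV_mul_mul_congr _ hT₂ (one_mem _)
    _ = applyV (Q * A₂ * (T₁ * P) * B₂) vac := by
      simp only [mul_assoc, mul_one, hT₁A₂.left_comm]
    _ = applyV (Q * A₂ * (A₁ * P * B₁) * B₂) vac := applyV_mul_mul_congr _ hT₁ hB₂
    _ = applyV (A₁ * (A₂ * P * B₂) * (B₁ * Q)) vac := by rw [exchange]; simp only [mul_assoc]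
    _ = applyV (A₁ * (T₂ * P) * (B₁ * Q)) vac :=
      (applyV_mul_mul_congr _ hT₂ (mul_mem hB₁ hQ)).symm
    _ = applyV (T₂ * (A₁ * P * B₁) * Q) vac := by simp only [mul_assoc, hT₂A₁.left_comm]
    _ = applyV (T₂ * (T₁ * P) * Q) vac := (applyV_mul_mul_congr _ hT₁ hQ).symm
    _ = applyV (T₂ * T₁ * Q * P) vac := by simp only [mul_assoc, hQP.eq]

end ApplyV

section Exchange
variable {N : ℕ} {W : Type*} [AddCommGroup W] [Module S W] (R Rinv : S → Mat2 N S)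
  (Tp Tm : S → Matrix (Fin N) (Fin N) (Module.End S W)) (vac : W) (c2 : S)

/-- The hypothesis of the theorem, with `T⁻(u)` on the leg `a` and `T⁺(vᵢ)` on the leg `legs i`;
`c2` stands for `hc/2`. -/
def ExchangeRel {k m : ℕ} (legs : Fin k → Fin m) (a : Fin m) (u : S) (v : Fin k → S) : Prop :=
  applyV (S := S) (leg1 a (Tm u) * ascProd fun i => leg1 (legs i) (Tp (v i))) vac =
    applyV (S := S)
      ((ascProd fun i => leg2 (Module.End S W) (legs i) a (R (-u + v i - c2))) *
        (ascProd fun i => leg1 (legs i) (Tp (v i))) *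
        descProd fun i => leg2 (Module.End S W) (legs i) a (Rinv (-u + v i + c2))) vac

variable {R Rinv Tp Tm vac c2}

theorem ExchangeRel.onLegs {k m m' : ℕ} {legs : Fin k → Fin m'} {a : Fin m'} {u : S}
    {v : Fin k → S} (h : ExchangeRel R Rinv Tp Tm vac c2 legs a u v) {ι : Fin m' → Fin m}
    (hι : Function.Injective ι) : ExchangeRel R Rinv Tp Tm vac c2 (ι ∘ legs) (ι a) u v := by
  have h' := applyV_onLegs ι h
  simp only [← onLegsHom_apply hι, map_mul, map_ascProd, map_descProd] at h'
  simp only [onLegsHom_apply, onLegs_leg1 hι, onLegs_leg2 hι] at h'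
  exact h'

theorem rtt_of_exchangeRel (hR : ∀ w, R w * Rinv w = 1 ∧ Rinv w * R w = 1)
    (hYBE : IsYangBaxter R) {k m : ℕ} {legs : Fin k → Fin m} (hlegs : Function.Injective legs)
    {a b : Fin m} (hab : a ≠ b) (ha : ∀ i, legs i ≠ a) (hb : ∀ i, legs i ≠ b) {u₁ u₂ : S}
    {v : Fin k → S} (h₁ : ExchangeRel R Rinv Tp Tm vac c2 legs a u₁ v)
    (h₂ : ExchangeRel R Rinv Tp Tm vac c2 legs b u₂ v) :
    applyV (S := S)
      (leg2 (Module.End S W) a b (R (u₁ - u₂)) * leg1 a (Tm u₁) * leg1 b (Tm u₂) *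
        ascProd fun i => leg1 (legs i) (Tp (v i))) vac =
      applyV (S := S)
        (leg1 b (Tm u₂) * leg1 a (Tm u₁) * leg2 (Module.End S W) a b (R (u₁ - u₂)) *
          ascProd fun i => leg1 (legs i) (Tp (v i))) vac := by
  have hlegs' : ∀ i j, i ≠ j → legs j ≠ legs i := fun i j hij h => hij (hlegs h).symm
  refine applyV_rtt_of_exchange h₁ h₂ ?_ ?_ ?_ ?_ ?_ ⟨_, mapMatrix_leg2 _ _ _⟩ ?_ ?_
  · refine mul_ascProd_mul_ascProd
      (fun i j hij => leg2_commute_leg2 (hlegs' i j hij) (hb j) (ha i).symm hab _ _) fun i => ?_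
    have h := hYBE.legs (A := Module.End S W) (ha i) (hb i) hab (-u₁ + v i - c2) (u₁ - u₂)
    rw [show -u₁ + v i - c2 + (u₁ - u₂) = -u₂ + v i - c2 by ring] at h
    rw [← mul_assoc, h]
  · refine mul_descProd_mul_descProd
      (fun i j hij => leg2_commute_leg2 (hlegs' i j hij) (ha j) (hb i).symm hab.symm _ _)
      fun i => ?_
    have h := hYBE.legs_inv (A := Module.End S W) hR (ha i) (hb i) hab (-u₁ + v i + c2) (u₁ - u₂)
    rwa [show -u₁ + v i + c2 + (u₁ - u₂) = -u₂ + v i + c2 by ring] at h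
  · exact commute_ascProd fun i => leg2_commute_leg1 (ha i) (hb i) _ _
  · exact commute_ascProd fun i => (leg2_commute_leg1 (ha i).symm hab _ _).symm
  · exact commute_ascProd fun i => (leg2_commute_leg1 (hb i).symm hab.symm _ _).symm
  all_goals exact descProd_mem fun i => ⟨_, mapMatrix_leg2 _ _ _⟩

end Exchange

/-- suppose `R̂` satisfies the Yang–Baxter equation
`R̂₁₂(x) R̂₁₃(x+y) R̂₂₃(y) = R̂₂₃(y) R̂₁₃(x+y) R̂₁₂(x)` (and is invertible, with
inverse `Rinv`), and `T⁻(u)` is an operator series on `W` satisfying, on the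
span of the vectors `T⁺₁(v₁) ⋯ T⁺ₖ(vₖ) 𝟙`,
`T⁻_{k+1}(u) T⁺₁(v₁)⋯T⁺ₖ(vₖ) = R̂_{1,k+1}(-u+v₁-hc/2) ⋯ R̂_{k,k+1}(-u+vₖ-hc/2)
T⁺₁(v₁)⋯T⁺ₖ(vₖ) R̂_{k,k+1}(-u+vₖ+hc/2)⁻¹ ⋯ R̂_{1,k+1}(-u+v₁+hc/2)⁻¹`.
Then `R̂(u₁-u₂) T⁻₁(u₁) T⁻₂(u₂) = T⁻₂(u₂) T⁻₁(u₁) R̂(u₁-u₂)` as operators on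
that span. -/
theorem stmt10 (N : ℕ) (W : Type*) [AddCommGroup W] [Module S W]
    (R Rinv : S → Mat2 N S)
    (hR : ∀ w : S, R w * Rinv w = 1 ∧ Rinv w * R w = 1)
    (hYBE : ∀ x y : S,
      leg2 (S := S) S (0 : Fin 3) 1 (R x) * leg2 S (0 : Fin 3) 2 (R (x + y)) *
          leg2 S (1 : Fin 3) 2 (R y) =
        leg2 S (1 : Fin 3) 2 (R y) * leg2 S (0 : Fin 3) 2 (R (x + y)) *
          leg2 S (0 : Fin 3) 1 (R x))
    (Tp Tm : S → Matrix (Fin N) (Fin N) (Module.End S W))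
    (vac : W) (c2 : S)
    (hTm : ∀ (k : ℕ) (u : S) (v : Fin k → S),
      applyV (S := S)
        (leg1 (Fin.last k) (Tm u) *
          ascProd (fun i : Fin k => leg1 i.castSucc (Tp (v i)))) vac =
      applyV (S := S)
        (ascProd (fun i : Fin k =>
            leg2 (Module.End S W) i.castSucc (Fin.last k) (R (-u + v i - c2))) *
          ascProd (fun i : Fin k => leg1 i.castSucc (Tp (v i))) *
          descProd (fun i : Fin k =>
            leg2 (Module.End S W) i.castSucc (Fin.last k) (Rinv (-u + v i + c2)))) vac) :
    ∀ (k : ℕ) (u₁ u₂ : S) (v : Fin k → S),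
      applyV (S := S)
        (leg2 (Module.End S W) (⟨k, by omega⟩ : Fin (k + 2)) ⟨k + 1, by omega⟩ (R (u₁ - u₂)) *
          leg1 (⟨k, by omega⟩ : Fin (k + 2)) (Tm u₁) *
          leg1 (⟨k + 1, by omega⟩ : Fin (k + 2)) (Tm u₂) *
          ascProd (fun i : Fin k => leg1 (⟨i.1, by omega⟩ : Fin (k + 2)) (Tp (v i)))) vac =
      applyV (S := S)
        (leg1 (⟨k + 1, by omega⟩ : Fin (k + 2)) (Tm u₂) *
          leg1 (⟨k, by omega⟩ : Fin (k + 2)) (Tm u₁) *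
          leg2 (Module.End S W) (⟨k, by omega⟩ : Fin (k + 2)) ⟨k + 1, by omega⟩ (R (u₁ - u₂)) *
          ascProd (fun i : Fin k => leg1 (⟨i.1, by omega⟩ : Fin (k + 2)) (Tp (v i)))) vac := by
  intro k u₁ u₂ v
  have h₁ : ExchangeRel R Rinv Tp Tm vac c2 (fun i : Fin k => (⟨i, by omega⟩ : Fin (k + 2)))
      ⟨k, by omega⟩ u₁ v :=
    ExchangeRel.onLegs (hTm k u₁ v) (Fin.castSucc_injective _)
  have h₂ : ExchangeRel R Rinv Tp Tm vac c2 (fun i : Fin k => (⟨i, by omega⟩ : Fin (k + 2)))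
      ⟨k + 1, by omega⟩ u₂ v := by
    have h := ExchangeRel.onLegs (hTm k u₂ v)
      (Fin.succAbove_right_injective (p := (Fin.last k).castSucc))
    simp only [Function.comp_def, Fin.succAbove_castSucc_of_lt _ _ (Fin.castSucc_lt_last _),
      Fin.succAbove_castSucc_self, Fin.succ_last] at h
    exact h
  refine rtt_of_exchangeRel hR hYBE (fun i j h => Fin.ext (Fin.mk.inj h)) ?_ ?_ ?_ h₁ h₂ <;>
    simp [Fin.ext_iff] <;> omega

end
end
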